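/- arXiv:2510.23974 — 2 statements merged into one kernel-verified Lean document; each statement's English description precedes it below -/
import Mathlib

section
/- Let E be a real inner product space and let x, y ∈ E be nonzero. Then the gradient of the cosine similarity map z ↦ g(z; y) = ⟪z, y⟫ / (‖z‖ ‖y‖) at the point x, namely (1 / (‖x‖ ‖y‖)) · ( y − (⟪y, x⟫ / ‖x‖²) · x ), has norm at most 1 / ‖x‖. In particular, if ‖x‖ ≥ K for some K > 0, the gradient norm is at most 1/K. -/
open scoped RealInnerProductSpace

/-- The vector is the projection of `y` onto `(ℝ ∙ x)ᗮ`; for `x = 0` both sides degenerate to `y`. -/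
theorem norm_sub_inner_div_norm_sq_smul_le {E : Type*} [NormedAddCommGroup E]
    [InnerProductSpace ℝ E] (x y : E) :
    ‖y - (⟪y, x⟫ / ‖x‖ ^ 2) • x‖ ≤ ‖y‖ := by
  have h := (ℝ ∙ x)ᗮ.norm_starProjection_apply_le y
  rwa [Submodule.starProjection_orthogonal_val, Submodule.starProjection_singleton,
    real_inner_comm] at h

theorem stmt5_general {E : Type*} [NormedAddCommGroup E] [InnerProductSpace ℝ E]
    (x y : E) :
    ‖(1 / (‖x‖ * ‖y‖)) • (y - (⟪y, x⟫ / ‖x‖ ^ 2) • x)‖ ≤ 1 / ‖x‖ ∧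
    ∀ K : ℝ, 0 < K → K ≤ ‖x‖ →
      ‖(1 / (‖x‖ * ‖y‖)) • (y - (⟪y, x⟫ / ‖x‖ ^ 2) • x)‖ ≤ 1 / K := by
  have hgrad : ‖(1 / (‖x‖ * ‖y‖)) • (y - (⟪y, x⟫ / ‖x‖ ^ 2) • x)‖ ≤ 1 / ‖x‖ := by
    rw [norm_smul, norm_div, norm_one, norm_mul, norm_norm, norm_norm]
    calc 1 / (‖x‖ * ‖y‖) * ‖y - (⟪y, x⟫ / ‖x‖ ^ 2) • x‖
        ≤ 1 / (‖x‖ * ‖y‖) * ‖y‖ := by gcongr; exact norm_sub_inner_div_norm_sq_smul_le x y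
      _ = ‖y‖ / ‖y‖ / ‖x‖ := by rw [div_div, mul_comm ‖y‖]; ring
      _ ≤ 1 / ‖x‖ := by gcongr; exact div_self_le_one _
  exact ⟨hgrad, fun K hK hKx => hgrad.trans (one_div_le_one_div_of_le hK hKx)⟩

/-- The gradient of the cosine similarity `z ↦ ⟪z, y⟫ / (‖z‖‖y‖)` at a nonzero point `x`,
namely `(1 / (‖x‖‖y‖)) • (y - (⟪y, x⟫ / ‖x‖²) • x)`, has norm at most `1 / ‖x‖`; in
particular, if `‖x‖ ≥ K > 0` then its norm is at most `1 / K`. -/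
theorem stmt5 {E : Type*} [NormedAddCommGroup E] [InnerProductSpace ℝ E]
    (x y : E) (hx : x ≠ 0) (hy : y ≠ 0) :
    ‖(1 / (‖x‖ * ‖y‖)) • (y - (⟪y, x⟫ / ‖x‖ ^ 2) • x)‖ ≤ 1 / ‖x‖ ∧
    ∀ K : ℝ, 0 < K → K ≤ ‖x‖ →
      ‖(1 / (‖x‖ * ‖y‖)) • (y - (⟪y, x⟫ / ‖x‖ ^ 2) • x)‖ ≤ 1 / K :=
  stmt5_general x y
end

section
/- Let E be a real inner product space, let y ∈ E be nonzero, let K > 0, and let S ⊆ E be a convex set such that ‖z‖ ≥ K for all z ∈ S. Then for all x, x' ∈ S, the cosine similarity satisfies | g(x; y) − g(x'; y) | ≤ (1/K) · ‖x − x'‖. -/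
/-!
The cosine similarity is `⟪x / ‖x‖, y / ‖y‖⟫`, so by Cauchy–Schwarz its variation in `x` is at most
`‖x / ‖x‖ - x' / ‖x'‖‖`. Expanding both squared norms gives
`‖x‖ ‖x'‖ ‖x / ‖x‖ - x' / ‖x'‖‖² = ‖x - x'‖² - (‖x‖ - ‖x'‖)²`, hence
`‖x / ‖x‖ - x' / ‖x'‖‖ ≤ ‖x - x'‖ / √(‖x‖ ‖x'‖) ≤ ‖x - x'‖ / K`.
-/

open scoped RealInnerProductSpace

open NormedSpace

section Normalize

variable {E : Type*} [NormedAddCommGroup E] [InnerProductSpace ℝ E]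

lemma norm_normalize_le_one (x : E) : ‖normalize x‖ ≤ 1 := by
  rcases eq_or_ne x 0 with rfl | hx
  · simp
  · exact (norm_normalize hx).le

lemma real_inner_div_norm_mul_norm_eq_inner_normalize (x y : E) :
    ⟪x, y⟫ / (‖x‖ * ‖y‖) = ⟪normalize x, normalize y⟫ := by
  rw [NormedSpace.normalize, NormedSpace.normalize, real_inner_smul_left, real_inner_smul_right]
  field_simp

lemma norm_normalize_sub_normalize_sq_mul_le (x x' : E) :
    ‖normalize x - normalize x'‖ ^ 2 * (‖x‖ * ‖x'‖) ≤ ‖x - x'‖ ^ 2 := by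
  rcases eq_or_ne x 0 with rfl | hx
  · simp
  rcases eq_or_ne x' 0 with rfl | hx'
  · simp
  have expand : ‖normalize x - normalize x'‖ ^ 2 * (‖x‖ * ‖x'‖) =
      2 * (‖x‖ * ‖x'‖) - 2 * ⟪x, x'⟫ := by
    rw [norm_sub_sq_real, norm_normalize hx, norm_normalize hx',
      ← real_inner_div_norm_mul_norm_eq_inner_normalize]
    field_simp
    ring
  rw [expand, norm_sub_sq_real]
  nlinarith [sq_nonneg (‖x‖ - ‖x'‖)]

lemma norm_normalize_sub_normalize_le {K : ℝ} (hK : 0 < K) {x x' : E}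
    (hx : K ≤ ‖x‖) (hx' : K ≤ ‖x'‖) :
    ‖normalize x - normalize x'‖ ≤ ‖x - x'‖ / K := by
  rw [le_div_iff₀ hK, ← sq_le_sq₀ (by positivity) (norm_nonneg _)]
  calc (‖normalize x - normalize x'‖ * K) ^ 2
      = ‖normalize x - normalize x'‖ ^ 2 * (K * K) := by ring
    _ ≤ ‖normalize x - normalize x'‖ ^ 2 * (‖x‖ * ‖x'‖) := by gcongr
    _ ≤ ‖x - x'‖ ^ 2 := norm_normalize_sub_normalize_sq_mul_le x x'

end Normalize

theorem stmt6_general {E : Type*} [NormedAddCommGroup E] [InnerProductSpace ℝ E]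
    (y : E) (K : ℝ) (hK : 0 < K) (S : Set E)
    (hnorm : ∀ z ∈ S, K ≤ ‖z‖) :
    ∀ x ∈ S, ∀ x' ∈ S,
      |⟪x, y⟫ / (‖x‖ * ‖y‖) - ⟪x', y⟫ / (‖x'‖ * ‖y‖)| ≤ (1 / K) * ‖x - x'‖ := by
  intro x hx x' hx'
  rw [real_inner_div_norm_mul_norm_eq_inner_normalize,
    real_inner_div_norm_mul_norm_eq_inner_normalize, ← inner_sub_left]
  calc |⟪normalize x - normalize x', normalize y⟫|
      ≤ ‖normalize x - normalize x'‖ * ‖normalize y‖ := abs_real_inner_le_norm _ _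
    _ ≤ ‖normalize x - normalize x'‖ :=
      mul_le_of_le_one_right (norm_nonneg _) (norm_normalize_le_one y)
    _ ≤ ‖x - x'‖ / K := norm_normalize_sub_normalize_le hK (hnorm x hx) (hnorm x' hx')
    _ = 1 / K * ‖x - x'‖ := by ring

/-- Lemma 4 of the appendix (Lipschitz property of cosine similarity away from the origin):
if `S` is convex and `‖z‖ ≥ K > 0` on `S`, then for all `x, x' ∈ S`,
`|g(x; y) − g(x'; y)| ≤ (1/K)‖x − x'‖` where `g(x; y) = ⟪x, y⟫ / (‖x‖‖y‖)`. -/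
theorem stmt6 {E : Type*} [NormedAddCommGroup E] [InnerProductSpace ℝ E]
    (y : E) (hy : y ≠ 0) (K : ℝ) (hK : 0 < K) (S : Set E) (hS : Convex ℝ S)
    (hnorm : ∀ z ∈ S, K ≤ ‖z‖) :
    ∀ x ∈ S, ∀ x' ∈ S,
      |⟪x, y⟫ / (‖x‖ * ‖y‖) - ⟪x', y⟫ / (‖x'‖ * ‖y‖)| ≤ (1 / K) * ‖x - x'‖ :=
  stmt6_general y K hK S hnorm
end
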